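/- Let O ⊂ ℝ^d be a nonempty bounded open set, T > 0, α ∈ (0,1] and s ≥ 1 with α·s ≥ d. Let u : [0,T] × cl(O) → ℝ satisfy: |u(t,x)| ≤ 1 for all (t,x); u(t,x) = 0 whenever x ∈ ∂O; there is a constant C such that for every t ∈ [0,T] the function u(t,·) is α-Hölder on cl(O) with constant C; and there is K < ∞ with ∫_O (1 − u(t,x)²)^{−s} dx ≤ K for every t ∈ [0,T]. Then |u(t,x)| < 1 for every (t,x) ∈ [0,T] × cl(O). -/

import Mathlib

/-!
If `|u(t,x)| = 1` at some point, `x` lies in the open set `O` because `u` vanishes on `∂O`, and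
Hölder continuity gives `1 - u(t,y)² ≤ 2 |u(t,x) - u(t,y)| ≤ 2C ‖y - x‖^α` near `x`. Hence
`(1 - u(t,·)²)^(-s) ≥ c ‖· - x‖^(-αs)` on a ball around `x`, and since `αs ≥ d` this is not
integrable there (integrate in polar coordinates), contradicting the energy bound `K`.
-/

open MeasureTheory Metric Set Module

lemma ENNReal.rpow_neg_le_rpow_neg {a b : ENNReal} (h : a ≤ b) {s : ℝ} (hs : 0 ≤ s) :
    b ^ (-s) ≤ a ^ (-s) := by
  rw [ENNReal.rpow_neg, ENNReal.rpow_neg]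
  exact ENNReal.inv_le_inv.mpr (ENNReal.rpow_le_rpow h hs)

lemma ENNReal.ofReal_rpow_le_rpow_ofReal {t p : ℝ} (hp : p < 0) :
    ENNReal.ofReal (t ^ p) ≤ ENNReal.ofReal t ^ p := by
  rcases lt_or_ge 0 t with ht | ht
  · exact (ENNReal.ofReal_rpow_of_pos ht).ge
  · rw [ENNReal.ofReal_of_nonpos ht, ENNReal.zero_rpow_of_neg hp]
    exact le_top

lemma ENNReal.ofReal_mul_rpow_rpow {c t α : ℝ} (hc : 0 < c) (ht : 0 ≤ t) (hα : 0 ≤ α) (p : ℝ) :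
    ENNReal.ofReal (c * t ^ α) ^ p = ENNReal.ofReal (c ^ p) * ENNReal.ofReal t ^ (α * p) := by
  rw [ENNReal.ofReal_mul hc.le, ← ENNReal.ofReal_rpow_of_nonneg ht hα,
    ENNReal.mul_rpow_of_ne_top ENNReal.ofReal_ne_top
      (ENNReal.rpow_ne_top_of_nonneg hα ENNReal.ofReal_ne_top),
    ENNReal.ofReal_rpow_of_pos hc, ← ENNReal.rpow_mul]

lemma one_sub_sq_le_two_mul_abs_sub {a b : ℝ} (ha : |a| = 1) (hb : |b| ≤ 1) :
    1 - b ^ 2 ≤ 2 * |a - b| := by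
  nlinarith [abs_sub_abs_le_abs_sub a b, sq_abs b, abs_nonneg b]

section HaarMeasure

variable {E : Type*} [NormedAddCommGroup E] [NormedSpace ℝ E] [FiniteDimensional ℝ E]
  [MeasurableSpace E] [BorelSpace E] (μ : Measure E) [μ.IsAddHaarMeasure]

lemma not_integrableOn_ball_norm_rpow_neg [Nontrivial E] {q r : ℝ}
    (hq : (finrank ℝ E : ℝ) ≤ q) (hr : 0 < r) :
    ¬ IntegrableOn (fun y : E => ‖y‖ ^ (-q)) (ball 0 r) μ := by
  rw [integrableOn_fun_norm_addHaar μ (f := fun t => t ^ (-q))]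
  intro h
  have hpow : IntegrableOn (fun t : ℝ => t ^ ((finrank ℝ E : ℝ) - 1 - q)) (Ioo 0 r) := by
    refine h.congr_fun (fun t ht => ?_) measurableSet_Ioo
    show t ^ _ * t ^ _ = _
    rw [← Real.rpow_natCast, ← Real.rpow_add ht.1, Nat.cast_sub finrank_pos]
    ring_nf
  rw [intervalIntegral.integrableOn_Ioo_rpow_iff hr] at hpow
  linarith

lemma lintegral_ball_rpow_neg_norm_eq_top [Nontrivial E] {q r : ℝ} (hq₀ : 0 < q)
    (hq : (finrank ℝ E : ℝ) ≤ q) (hr : 0 < r) :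
    ∫⁻ y in ball 0 r, ENNReal.ofReal ‖y‖ ^ (-q) ∂μ = ⊤ := by
  by_contra h
  refine not_integrableOn_ball_norm_rpow_neg μ hq hr ?_
  rw [IntegrableOn, ← lintegral_ofReal_ne_top_iff_integrable
    (measurable_norm.pow_const _).aestronglyMeasurable
    (.of_forall fun y => Real.rpow_nonneg (norm_nonneg y) _)]
  exact ne_top_of_le_ne_top h
    (lintegral_mono fun y => ENNReal.ofReal_rpow_le_rpow_ofReal (neg_neg_of_pos hq₀))

lemma lintegral_ball_rpow_neg_norm_sub_eq_top (x : E) {q r : ℝ} (hq₀ : 0 < q)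
    (hq : (finrank ℝ E : ℝ) ≤ q) (hr : 0 < r) :
    ∫⁻ y in ball x r, ENNReal.ofReal ‖y - x‖ ^ (-q) ∂μ = ⊤ := by
  rcases subsingleton_or_nontrivial E with hE | hE
  · have hpole : ∀ y ∈ ball x r, ENNReal.ofReal ‖y - x‖ ^ (-q) = ⊤ := fun y _ => by
      rw [Subsingleton.elim y x, sub_self, norm_zero, ENNReal.ofReal_zero,
        ENNReal.zero_rpow_of_neg (neg_neg_of_pos hq₀)]
    rw [setLIntegral_congr_fun measurableSet_ball hpole, setLIntegral_const,
      ENNReal.top_mul (measure_ball_pos μ x hr).ne']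
  · have h₀ := lintegral_ball_rpow_neg_norm_eq_top μ hq₀ hq hr
    rw [← lintegral_indicator measurableSet_ball, ← lintegral_sub_right_eq_self _ x] at h₀
    rw [← lintegral_indicator measurableSet_ball, ← h₀]
    congr 1 with y
    simp only [indicator, mem_ball_iff_norm, sub_zero]

lemma lintegral_ball_one_sub_sq_rpow_neg_eq_top {f : E → ℝ} {x : E} {r C α s : ℝ}
    (hr : 0 < r) (hC : 0 < C) (hα : 0 < α) (hs : 0 < s) (hαs : (finrank ℝ E : ℝ) ≤ α * s)
    (hfx : |f x| = 1) (hf : ∀ y ∈ ball x r, |f y| ≤ 1)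
    (hHolder : ∀ y ∈ ball x r, |f x - f y| ≤ C * ‖x - y‖ ^ α) :
    ∫⁻ y in ball x r, ENNReal.ofReal (1 - f y ^ 2) ^ (-s) ∂μ = ⊤ := by
  have hpt : ∀ y ∈ ball x r, ENNReal.ofReal ((2 * C) ^ (-s)) *
      ENNReal.ofReal ‖y - x‖ ^ (-(α * s)) ≤ ENNReal.ofReal (1 - f y ^ 2) ^ (-s) := by
    intro y hy
    rw [← mul_neg, ← ENNReal.ofReal_mul_rpow_rpow (by positivity) (norm_nonneg _) hα.le]
    refine ENNReal.rpow_neg_le_rpow_neg (ENNReal.ofReal_le_ofReal ?_) hs.le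
    calc 1 - f y ^ 2 ≤ 2 * |f x - f y| := one_sub_sq_le_two_mul_abs_sub hfx (hf y hy)
      _ ≤ 2 * C * ‖y - x‖ ^ α := by
        rw [norm_sub_rev]; linarith [hHolder y hy]
  refine top_le_iff.mp ?_
  calc ⊤ = ENNReal.ofReal ((2 * C) ^ (-s)) *
        ∫⁻ y in ball x r, ENNReal.ofReal ‖y - x‖ ^ (-(α * s)) ∂μ := by
        rw [lintegral_ball_rpow_neg_norm_sub_eq_top μ x (by positivity) hαs hr,
          ENNReal.mul_top (ENNReal.ofReal_pos.mpr (by positivity)).ne']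
    _ = ∫⁻ y in ball x r, ENNReal.ofReal ((2 * C) ^ (-s)) *
        ENNReal.ofReal ‖y - x‖ ^ (-(α * s)) ∂μ :=
        (lintegral_const_mul' _ _ ENNReal.ofReal_ne_top).symm
    _ ≤ _ := setLIntegral_mono' measurableSet_ball hpt

end HaarMeasure

theorem stmt_15_general (d : ℕ) (O : Set (EuclideanSpace ℝ (Fin d)))
    (hO : IsOpen O)
    (T : ℝ)
    (α s : ℝ) (hα : α ∈ Set.Ioc (0 : ℝ) 1) (hs : 1 ≤ s) (hαs : (d : ℝ) ≤ α * s)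
    (u : ℝ → EuclideanSpace ℝ (Fin d) → ℝ)
    (hub : ∀ t ∈ Set.Icc (0 : ℝ) T, ∀ x ∈ closure O, |u t x| ≤ 1)
    (hbdry : ∀ t ∈ Set.Icc (0 : ℝ) T, ∀ x ∈ frontier O, u t x = 0)
    (C : ℝ)
    (hHolder : ∀ t ∈ Set.Icc (0 : ℝ) T, ∀ x ∈ closure O, ∀ y ∈ closure O,
      |u t x - u t y| ≤ C * ‖x - y‖ ^ α)
    (K : ℝ)
    (hint : ∀ t ∈ Set.Icc (0 : ℝ) T,
      ∫⁻ x in O, (ENNReal.ofReal (1 - u t x ^ 2)) ^ (-s) ≤ ENNReal.ofReal K) :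
    ∀ t ∈ Set.Icc (0 : ℝ) T, ∀ x ∈ closure O, |u t x| < 1 := by
  intro t ht x hx
  by_contra! hge
  have hx1 : |u t x| = 1 := le_antisymm (hub t ht x hx) hge
  have hxO : x ∈ O := by
    by_contra hxO
    have hxf : x ∈ frontier O := by rw [frontier, hO.interior_eq]; exact ⟨hx, hxO⟩
    simp [hbdry t ht x hxf] at hx1
  obtain ⟨r, hr, hball⟩ := Metric.isOpen_iff.mp hO x hxO
  have hclosure : ∀ y ∈ ball x r, y ∈ closure O := fun y hy => subset_closure (hball hy)
  -- a Hölder constant can always be enlarged, so we may take it positive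
  have htop := lintegral_ball_one_sub_sq_rpow_neg_eq_top volume (C := max C 1) (s := s) hr
    (lt_max_of_lt_right one_pos) hα.1 (by linarith) (by simpa using hαs) hx1
    (fun y hy => hub t ht y (hclosure y hy))
    (fun y hy => (hHolder t ht x hx y (hclosure y hy)).trans (by gcongr; exact le_max_left C 1))
  exact ENNReal.ofReal_ne_top <| top_le_iff.mp <|
    htop.ge.trans ((lintegral_mono_set hball).trans (hint t ht))

/-- Pathwise no-contact lemma: let `O ⊂ ℝ^d` be a nonempty bounded open set, `T > 0`,
`α ∈ (0,1]`, `s ≥ 1` with `α s ≥ d`, and `u : [0,T] × cl(O) → ℝ` with `|u| ≤ 1`,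
vanishing on `∂O`, uniformly `α`-Hölder in space with constant `C`, and with
`∫_O (1 - u(t,·)²)^{-s} ≤ K < ∞` for every `t`. Then `|u(t,x)| < 1` everywhere on
`[0,T] × cl(O)`. -/
theorem stmt_15 (d : ℕ) (O : Set (EuclideanSpace ℝ (Fin d)))
    (hO : IsOpen O) (hObd : Bornology.IsBounded O) (hne : O.Nonempty)
    (T : ℝ) (hT : 0 < T)
    (α s : ℝ) (hα : α ∈ Set.Ioc (0 : ℝ) 1) (hs : 1 ≤ s) (hαs : (d : ℝ) ≤ α * s)
    (u : ℝ → EuclideanSpace ℝ (Fin d) → ℝ)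
    (hub : ∀ t ∈ Set.Icc (0 : ℝ) T, ∀ x ∈ closure O, |u t x| ≤ 1)
    (hbdry : ∀ t ∈ Set.Icc (0 : ℝ) T, ∀ x ∈ frontier O, u t x = 0)
    (C : ℝ)
    (hHolder : ∀ t ∈ Set.Icc (0 : ℝ) T, ∀ x ∈ closure O, ∀ y ∈ closure O,
      |u t x - u t y| ≤ C * ‖x - y‖ ^ α)
    (K : ℝ)
    (hint : ∀ t ∈ Set.Icc (0 : ℝ) T,
      ∫⁻ x in O, (ENNReal.ofReal (1 - u t x ^ 2)) ^ (-s) ≤ ENNReal.ofReal K) :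
    ∀ t ∈ Set.Icc (0 : ℝ) T, ∀ x ∈ closure O, |u t x| < 1 :=
  stmt_15_general d O hO T α s hα hs hαs u hub hbdry C hHolder K hint
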